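/- arXiv:1612.07584 — 5 statements merged into one kernel-verified Lean document; each statement's English description precedes it below -/
import Mathlib

section
/- The function c ↦ -4c/(1 - 2√(1+c) + 2(1+c)·log(1 + 1/√(1+c))) has derivative zero at the unique point c₀ ∈ (-1,0) where √(1+c₀) = 1/(-2·W₋₁(-1/(2√e)) - 1), where W₋₁ is the lower real branch of the Lambert W function. -/
/-- `w` is the value `W₋₁(-1/(2√e))` of the lower real branch of the Lambert W
function, characterised by `w ≤ -1` and `w·e^w = -1/(2√e)`. -/
theorem phi36_coupling_critical_point
    (w : ℝ) (hw : w ≤ -1)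
    (hW : w * Real.exp w = -1 / (2 * Real.sqrt (Real.exp 1))) :
    ∃! c₀ : ℝ, c₀ ∈ Set.Ioo (-1 : ℝ) 0 ∧
      Real.sqrt (1 + c₀) = 1 / (-2 * w - 1) ∧
      deriv (fun c : ℝ =>
        (-4 * c) / (1 - 2 * Real.sqrt (1 + c)
          + 2 * (1 + c) * Real.log (1 + 1 / Real.sqrt (1 + c)))) c₀ = 0 := by
  -- √(e) = exp(1/2)
  have he2 : Real.sqrt (Real.exp 1) = Real.exp (1/2) := by
    rw [show Real.exp 1 = Real.exp (1/2) * Real.exp (1/2) by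
      rw [← Real.exp_add]; norm_num]
    exact Real.sqrt_mul_self (Real.exp_pos _).le
  rw [he2] at hW
  have hE : (0:ℝ) < Real.exp (1/2) := Real.exp_pos _
  have h1 : (-2*w) * Real.exp w = Real.exp (-(1/2)) := by
    rw [Real.exp_neg]
    linear_combination (-2:ℝ) * hW
  have hexp : -2*w = Real.exp (-(1/2) - w) := by
    rw [Real.exp_sub, ← h1, mul_div_assoc, div_self (Real.exp_ne_zero w), mul_one]
  have hlogw : Real.log (-2*w) = -(1/2) - w := by rw [hexp, Real.log_exp]
  have hwlt : w < -1 := by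
    rcases lt_or_eq_of_le hw with h | h
    · exact h
    · exfalso
      rw [h] at hlogw
      have h2 : Real.log 2 = 1/2 := by norm_num at hlogw ⊢; linarith
      have := Real.log_two_gt_d9
      norm_num [h2] at this
  set t : ℝ := 1/(-2*w-1) with htdef
  have hden : (1:ℝ) < -2*w-1 := by linarith
  have ht0 : 0 < t := by positivity
  have ht1 : t < 1 := by rw [htdef]; rw [div_lt_one (by linarith)]; linarith
  have hinv : 1/t = -2*w - 1 := one_div_one_div _
  have hlog : Real.log (1 + 1/t) = 1/(2*t) := by
    have e1 : (1:ℝ) + 1/t = -2*w := by rw [hinv]; ring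
    have e2 : 1/(2*t) = -(1/2) - w := by
      rw [show (1:ℝ)/(2*t) = (1/t)/2 by ring, hinv]; ring
    rw [e1, hlogw, e2]
  -- the critical point
  set c₀ : ℝ := t^2 - 1 with hc₀def
  have h1c : 1 + c₀ = t^2 := by rw [hc₀def]; ring
  have hsq : Real.sqrt (1 + c₀) = t := by rw [h1c]; exact Real.sqrt_sq ht0.le
  have hne : (1:ℝ) + c₀ ≠ 0 := by rw [h1c]; positivity
  -- derivative machinery
  have hA : HasDerivAt (fun c : ℝ => 1 + c) 1 c₀ := by
    simpa using (hasDerivAt_id c₀).const_add (1:ℝ)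
  have hS : HasDerivAt (fun c : ℝ => Real.sqrt (1 + c)) (1/(2*t)) c₀ := by
    have h := (Real.hasDerivAt_sqrt hne).comp c₀ hA
    simpa [Function.comp_def, hsq] using h
  have hU : HasDerivAt (fun c : ℝ => 1 + 1 / Real.sqrt (1 + c))
      (-(1/(2*t))/t^2) c₀ := by
    have h := (hS.inv (by rw [hsq]; exact ht0.ne')).const_add (1:ℝ)
    simpa [one_div, hsq] using h
  have hUne : (1:ℝ) + 1 / Real.sqrt (1 + c₀) ≠ 0 := by
    rw [hsq]; positivity
  have hL : HasDerivAt (fun c : ℝ => Real.log (1 + 1 / Real.sqrt (1 + c)))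
      ((-(1/(2*t))/t^2) / (1 + 1/t)) c₀ := by
    have h := hU.log hUne
    simpa [hsq] using h
  have hB : HasDerivAt (fun c : ℝ => 2 * (1 + c)) 2 c₀ := by
    simpa using hA.const_mul (2:ℝ)
  have hD : HasDerivAt (fun c : ℝ => 1 - 2 * Real.sqrt (1 + c)
      + 2 * (1 + c) * Real.log (1 + 1 / Real.sqrt (1 + c))) (-(1/(t+1))) c₀ := by
    have h := (((hS.const_mul (2:ℝ)).const_sub 1)).add (hB.mul hL)
    refine h.congr_deriv ?_
    rw [hsq, h1c, hlog]
    have h1t : t + 1 ≠ 0 := by positivity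
    field_simp
    ring
  have hDval : 1 - 2 * Real.sqrt (1 + c₀)
      + 2 * (1 + c₀) * Real.log (1 + 1 / Real.sqrt (1 + c₀)) = 1 - t := by
    rw [hsq, h1c, hlog]
    field_simp
    ring
  have hDne : 1 - 2 * Real.sqrt (1 + c₀)
      + 2 * (1 + c₀) * Real.log (1 + 1 / Real.sqrt (1 + c₀)) ≠ 0 := by
    rw [hDval]; intro h; linarith
  have hN : HasDerivAt (fun c : ℝ => -4 * c) (-4) c₀ := by
    simpa using (hasDerivAt_id c₀).const_mul (-4:ℝ)
  have hF : HasDerivAt (fun c : ℝ =>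
      (-4 * c) / (1 - 2 * Real.sqrt (1 + c)
        + 2 * (1 + c) * Real.log (1 + 1 / Real.sqrt (1 + c)))) 0 c₀ := by
    have h := hN.div hD hDne
    refine h.congr_deriv ?_
    rw [hDval, hc₀def]
    have h1t : t + 1 ≠ 0 := by positivity
    have h2t : (1:ℝ) - t ≠ 0 := by intro h; linarith
    field_simp
    ring
  refine ⟨c₀, ⟨⟨by nlinarith, by nlinarith⟩, hsq, hF.deriv⟩, ?_⟩
  rintro c ⟨⟨hc1, hc2⟩, hc3, -⟩
  have : 1 + c = t^2 := by
    have h := congrArg (·^2) hc3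
    rwa [Real.sq_sqrt (by linarith)] at h
  rw [hc₀def]; linarith
end

section
/- For every x > 0, the improper integral ∫₀^∞ (y²/2)·(1/(x+y+1) - 1/(y+1) + x/(y+1)² - x²/(y+1)³) dy converges and equals (1/4)·(x(2+3x) - 2(1+x)²·log(1+x)). -/
open MeasureTheory

theorem phi36_tadpole_renormalised (x : ℝ) (hx : 0 < x) :
    IntegrableOn (fun y : ℝ => y ^ 2 / 2 *
        (1 / (x + y + 1) - 1 / (y + 1) + x / (y + 1) ^ 2 - x ^ 2 / (y + 1) ^ 3))
      (Set.Ioi 0) ∧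
    (∫ y in Set.Ioi (0 : ℝ), y ^ 2 / 2 *
        (1 / (x + y + 1) - 1 / (y + 1) + x / (y + 1) ^ 2 - x ^ 2 / (y + 1) ^ 3))
      = 1 / 4 * (x * (2 + 3 * x) - 2 * (1 + x) ^ 2 * Real.log (1 + x)) := by
  set f : ℝ → ℝ := fun y => y ^ 2 / 2 *
      (1 / (x + y + 1) - 1 / (y + 1) + x / (y + 1) ^ 2 - x ^ 2 / (y + 1) ^ 3) with hf
  set F : ℝ → ℝ := fun y => (1 + x) ^ 2 / 2 * (Real.log (y + 1 + x) - Real.log (y + 1))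
      - (x + 2 * x ^ 2) / (2 * (y + 1)) + x ^ 2 / (4 * (y + 1) ^ 2) with hF
  -- derivative
  have hderiv : ∀ y ∈ Set.Ici (0 : ℝ), HasDerivAt F (f y) y := by
    intro y hy
    have hy0 : (0 : ℝ) ≤ y := hy
    have h1 : (0 : ℝ) < y + 1 := by linarith
    have h2 : (0 : ℝ) < y + 1 + x := by linarith
    have d1 : HasDerivAt (fun y : ℝ => Real.log (y + 1 + x)) (1 / (y + 1 + x)) y := by
      have := (Real.hasDerivAt_log h2.ne').comp y
        (((hasDerivAt_id y).add_const 1).add_const x)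
      simpa [one_div, Function.comp_def] using this
    have d2 : HasDerivAt (fun y : ℝ => Real.log (y + 1)) (1 / (y + 1)) y := by
      have := (Real.hasDerivAt_log h1.ne').comp y ((hasDerivAt_id y).add_const 1)
      simpa [one_div, Function.comp_def] using this
    have d3 : HasDerivAt (fun y : ℝ => (x + 2 * x ^ 2) / (2 * (y + 1)))
        (-(x + 2 * x ^ 2) * 2 / (2 * (y + 1)) ^ 2) y := by
      have hne : (2 * (y + 1)) ≠ 0 := by positivity
      have := (hasDerivAt_const y (x + 2 * x ^ 2)).div
        (((hasDerivAt_id y).add_const 1).const_mul 2) hne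
      refine this.congr_deriv ?_
      simp only [id]
      field_simp
      ring
    have d4 : HasDerivAt (fun y : ℝ => x ^ 2 / (4 * (y + 1) ^ 2))
        (-(x ^ 2) * (8 * (y + 1)) / (4 * (y + 1) ^ 2) ^ 2) y := by
      have hne : (4 * (y + 1) ^ 2) ≠ 0 := by positivity
      have hd : HasDerivAt (fun y : ℝ => 4 * (y + 1) ^ 2) (8 * (y + 1)) y := by
        have := (((hasDerivAt_id y).add_const 1).pow 2).const_mul (4 : ℝ)
        refine this.congr_deriv ?_
        simp
        ring
      have := (hasDerivAt_const y (x ^ 2)).div hd hne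
      refine this.congr_deriv ?_
      field_simp
      ring
    have d12 := ((d1.sub d2).const_mul ((1 + x) ^ 2 / 2))
    have := (d12.sub d3).add d4
    refine this.congr_deriv ?_
    have hxy : x + y + 1 ≠ 0 := by positivity
    have h1' : y + 1 ≠ 0 := h1.ne'
    have h2' : y + 1 + x ≠ 0 := h2.ne'
    rw [hf]
    field_simp
    ring
  -- nonpositivity of f
  have hfle : ∀ y ∈ Set.Ioi (0 : ℝ), f y ≤ 0 := by
    intro y hy
    have hy0 : (0 : ℝ) < y := hy
    have h1 : (0 : ℝ) < y + 1 := by linarith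
    have h2 : (0 : ℝ) < x + y + 1 := by linarith
    have key : f y = -(y ^ 2 * x ^ 3 / (2 * (y + 1) ^ 3 * (x + y + 1))) := by
      rw [hf]
      field_simp
      ring
    rw [key, neg_nonpos]
    positivity
  -- limit of F at infinity
  have hlim : Filter.Tendsto F Filter.atTop (nhds 0) := by
    have hA : Filter.Tendsto (fun y : ℝ => Real.log (y + 1 + x) - Real.log (y + 1))
        Filter.atTop (nhds 0) := by
      have h1 : Filter.Tendsto (fun y : ℝ => 1 + x / (y + 1)) Filter.atTop (nhds 1) := by
        have := Filter.Tendsto.div_atTop (tendsto_const_nhds (x := x))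
          (Filter.tendsto_atTop_add_const_right _ 1 Filter.tendsto_id)
        simpa using (tendsto_const_nhds (x := (1:ℝ))).add this
      have h2 : Filter.Tendsto (fun y : ℝ => Real.log (1 + x / (y + 1)))
          Filter.atTop (nhds 0) := by
        have := (Real.continuousAt_log (by norm_num : (1:ℝ) ≠ 0)).tendsto.comp h1
        simpa [Function.comp_def] using this
      refine h2.congr' ?_
      filter_upwards [Filter.eventually_gt_atTop (0 : ℝ)] with y hy
      have h1 : (0 : ℝ) < y + 1 := by linarith
      have h2' : (0 : ℝ) < y + 1 + x := by linarith
      rw [show (1 : ℝ) + x / (y + 1) = (y + 1 + x) / (y + 1) by field_simp,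
        Real.log_div h2'.ne' h1.ne']
    have hyt : Filter.Tendsto (fun y : ℝ => y + 1) Filter.atTop Filter.atTop :=
      Filter.tendsto_atTop_add_const_right _ 1 Filter.tendsto_id
    have hB : Filter.Tendsto (fun y : ℝ => (x + 2 * x ^ 2) / (2 * (y + 1)))
        Filter.atTop (nhds 0) :=
      Filter.Tendsto.div_atTop tendsto_const_nhds (hyt.const_mul_atTop two_pos)
    have hC : Filter.Tendsto (fun y : ℝ => x ^ 2 / (4 * (y + 1) ^ 2))
        Filter.atTop (nhds 0) := by
      refine Filter.Tendsto.div_atTop tendsto_const_nhds ?_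
      exact Filter.Tendsto.const_mul_atTop four_pos
        ((Filter.tendsto_pow_atTop two_ne_zero).comp hyt)
    have := ((hA.const_mul ((1 + x) ^ 2 / 2)).sub hB).add hC
    simpa using this
  constructor
  · exact integrableOn_Ioi_deriv_of_nonpos' hderiv hfle hlim
  · rw [integral_Ioi_of_hasDerivAt_of_nonpos' hderiv hfle hlim]
    have h1 : (0 : ℝ) < 1 + x := by linarith
    simp only [hF]
    rw [show (0 : ℝ) + 1 + x = 1 + x by ring]
    simp [Real.log_one]
    field_simp
    ring
end

section
/- The function h(σ) = 2(1+σ) - (1+σ)·log(1+σ) - 2 is positive for σ ∈ (1, σ*) and vanishes at σ* = -2/W₀(-2/e²) - 1, where W₀ is the principal branch of the Lambert W function. -/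
private lemma phi34_hasDeriv (x : ℝ) (hx : x ≠ 0) :
    HasDerivAt (fun t : ℝ => 2 * t - t * Real.log t - 2) (1 - Real.log x) x := by
  have h1 : HasDerivAt (fun t : ℝ => 2 * t) 2 x := by
    simpa using (hasDerivAt_id x).const_mul 2
  have h2 := Real.hasDerivAt_mul_log hx
  have h3 : HasDerivAt (fun t : ℝ => 2 * t - t * Real.log t - 2) (2 - (Real.log x + 1)) x :=
    (h1.sub h2).sub_const 2
  convert h3 using 1
  ring

/-- `w0 = W₀(-2/e²)` is the value of the principal branch of the Lambert W
function, characterised by `w0 ≥ -1` and `w0·e^{w0} = -2/e²`. -/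
theorem phi34_positivity_bound
    (w0 : ℝ) (hw0 : -1 ≤ w0)
    (hW : w0 * Real.exp w0 = -2 / Real.exp 2) :
    (∀ σ : ℝ, 1 < σ → σ < -2 / w0 - 1 →
      0 < 2 * (1 + σ) - (1 + σ) * Real.log (1 + σ) - 2) ∧
    2 * (1 + (-2 / w0 - 1)) - (1 + (-2 / w0 - 1)) * Real.log (1 + (-2 / w0 - 1)) - 2 = 0 := by
  have he2 : (0:ℝ) < Real.exp 2 := Real.exp_pos 2
  have hew : (0:ℝ) < Real.exp w0 := Real.exp_pos w0
  -- w0 < 0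
  have hneg : w0 < 0 := by
    by_contra h
    push_neg at h
    have h1 : 0 ≤ w0 * Real.exp w0 := mul_nonneg h hew.le
    have h2 : -2 / Real.exp 2 < 0 := div_neg_of_neg_of_pos (by norm_num) he2
    linarith [hW ▸ h1]
  -- w0 ≠ -1
  have hne : w0 ≠ -1 := by
    intro heq
    rw [heq] at hW
    have hval : Real.exp 2 = Real.exp 1 * Real.exp 1 := by
      rw [← Real.exp_add]; norm_num
    have hneg1 : Real.exp (-1) = (Real.exp 1)⁻¹ := by
      rw [Real.exp_neg]
    rw [hneg1, hval] at hW
    have he1 : (0:ℝ) < Real.exp 1 := Real.exp_pos 1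
    have : Real.exp 1 = 2 := by
      field_simp at hW
      nlinarith [hW]
    nlinarith [Real.exp_one_gt_d9]
  have hgt : -1 < w0 := lt_of_le_of_ne hw0 (Ne.symm hne)
  -- t* = -2/w0 > 2
  have hts2 : (2:ℝ) < -2 / w0 := by
    rw [lt_div_iff_of_neg hneg]; linarith
  have htspos : (0:ℝ) < -2 / w0 := by linarith
  -- log (-2/w0) = w0 + 2
  have hkey : Real.exp (w0 + 2) = -2 / w0 := by
    have h' : w0 * Real.exp w0 * Real.exp 2 = -2 := by
      rw [hW]; field_simp
    rw [Real.exp_add, eq_div_iff hneg.ne]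
    linear_combination h'
  have hlogts : Real.log (-2 / w0) = w0 + 2 := by
    rw [← hkey, Real.log_exp]
  -- the value at the endpoint is zero
  have hone : 1 + (-2 / w0 - 1) = -2 / w0 := by ring
  have hzero : 2 * (-2 / w0) - (-2 / w0) * Real.log (-2 / w0) - 2 = 0 := by
    rw [hlogts]
    field_simp [hneg.ne]
    ring
  constructor
  · intro σ h1 h2
    set t : ℝ := 1 + σ with ht
    have ht2 : (2:ℝ) < t := by simp [ht]; linarith
    have htlt : t < -2 / w0 := by simp [ht]; linarith
    have htpos : (0:ℝ) < t := by linarith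
    rcases lt_or_ge t (Real.exp 1) with hcase | hcase
    · -- t < e : log t < 1
      have hlog : Real.log t < 1 := by
        have := Real.log_lt_log htpos hcase
        rwa [Real.log_exp] at this
      nlinarith [mul_pos htpos (show (0:ℝ) < 1 - Real.log t by linarith)]
    · -- e ≤ t : h strictly decreasing on [e, ∞)
      have hanti : StrictAntiOn (fun t : ℝ => 2 * t - t * Real.log t - 2)
          (Set.Ici (Real.exp 1)) := by
        apply strictAntiOn_of_deriv_neg (convex_Ici _)
        · intro x hx
          have hxpos : (0:ℝ) < x := lt_of_lt_of_le (Real.exp_pos 1) hx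
          exact (phi34_hasDeriv x hxpos.ne').continuousAt.continuousWithinAt
        · intro x hx
          rw [interior_Ici] at hx
          have hxpos : (0:ℝ) < x := lt_trans (Real.exp_pos 1) hx
          rw [(phi34_hasDeriv x hxpos.ne').deriv]
          have : (1:ℝ) < Real.log x := (Real.lt_log_iff_exp_lt hxpos).mpr hx
          linarith
      have hmem1 : t ∈ Set.Ici (Real.exp 1) := hcase
      have hmem2 : -2 / w0 ∈ Set.Ici (Real.exp 1) := le_trans hcase htlt.le
      have h5 := hanti hmem1 hmem2 htlt
      dsimp only at h5
      exact lt_of_le_of_lt (le_of_eq hzero.symm) h5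
  · rw [hone]; exact hzero
end

section
/- The function s ↦ 2·s·log(1 + 1/s) - 1 is strictly increasing on (0,1], is negative at s → 0⁺, and has a unique zero at s₀ = 1/(-2·W₋₁(-1/(2√e)) - 1); it is positive for s ∈ (s₀, 1]. -/
open Filter

private lemma phi36_hasDerivAt (s : ℝ) (hs : 0 < s) :
    HasDerivAt (fun s : ℝ => 2 * s * Real.log (1 + 1 / s) - 1)
      (2 * Real.log (1 + 1 / s) - 2 / (s + 1)) s := by
  have hs0 : s ≠ 0 := hs.ne'
  have hpos : (0:ℝ) < 1 + 1 / s := by positivity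
  have h1 : HasDerivAt (fun s : ℝ => 1 + 1 / s) (-(s ^ 2)⁻¹) s := by
    simpa [one_div] using ((hasDerivAt_inv hs0).const_add 1)
  have h2 : HasDerivAt (fun s : ℝ => Real.log (1 + 1 / s))
      (-(s ^ 2)⁻¹ / (1 + 1 / s)) s := h1.log hpos.ne'
  have h3 : HasDerivAt (fun s : ℝ => 2 * s) 2 s := by
    simpa using (hasDerivAt_id s).const_mul 2
  have h4 := (h3.mul h2).sub_const 1
  refine h4.congr_deriv ?_
  have hs1 : s + 1 ≠ 0 := by positivity
  field_simp
  ring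

private lemma phi36_deriv_pos (s : ℝ) (hs : 0 < s) :
    0 < 2 * Real.log (1 + 1 / s) - 2 / (s + 1) := by
  have h1 : s / (s + 1) < 1 := by
    rw [div_lt_one (by positivity)]; linarith
  have h2 : Real.log (s / (s + 1)) < s / (s + 1) - 1 :=
    Real.log_lt_sub_one_of_pos (by positivity) h1.ne
  have h3 : (1 : ℝ) + 1 / s = (s / (s + 1))⁻¹ := by
    rw [inv_div]; field_simp
  have h4 : Real.log (1 + 1 / s) = -Real.log (s / (s + 1)) := by
    rw [h3, Real.log_inv]
  have h5 : s / (s + 1) - 1 = -(1 / (s + 1)) := by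
    field_simp
    ring
  have h6 : 1 / (s + 1) < Real.log (1 + 1 / s) := by
    rw [h4]; rw [h5] at h2; linarith
  have h7 : 2 / (s + 1) = 2 * (1 / (s + 1)) := by ring
  rw [h7]; linarith

private lemma phi36_smo :
    StrictMonoOn (fun s : ℝ => 2 * s * Real.log (1 + 1 / s) - 1) (Set.Ioc 0 1) := by
  apply strictMonoOn_of_deriv_pos (convex_Ioc 0 1)
  · exact fun s hs => (phi36_hasDerivAt s hs.1).continuousAt.continuousWithinAt
  · intro x hx
    rw [interior_Ioc] at hx
    rw [(phi36_hasDerivAt x hx.1).deriv]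
    exact phi36_deriv_pos x hx.1

/-- `w = W₋₁(-1/(2√e))` is the lower real branch value of the Lambert W
function, characterised by `w ≤ -1` and `w·e^w = -1/(2√e)`. -/
theorem phi36_endpoint_positivity
    (w : ℝ) (hw : w ≤ -1)
    (hW : w * Real.exp w = -1 / (2 * Real.sqrt (Real.exp 1))) :
    StrictMonoOn (fun s : ℝ => 2 * s * Real.log (1 + 1 / s) - 1)
      (Set.Ioc 0 1) ∧
    (∀ᶠ s in nhdsWithin (0 : ℝ) (Set.Ioi 0),
      2 * s * Real.log (1 + 1 / s) - 1 < 0) ∧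
    (2 * (1 / (-2 * w - 1)) * Real.log (1 + 1 / (1 / (-2 * w - 1))) - 1 = 0) ∧
    (∀ s ∈ Set.Ioc (0 : ℝ) 1,
      2 * s * Real.log (1 + 1 / s) - 1 = 0 → s = 1 / (-2 * w - 1)) ∧
    (∀ s : ℝ, 1 / (-2 * w - 1) < s → s ≤ 1 →
      0 < 2 * s * Real.log (1 + 1 / s) - 1) := by
  set t : ℝ := -2 * w - 1 with ht
  have ht1 : (1:ℝ) ≤ t := by simp only [ht]; linarith
  have ht0 : (0:ℝ) < t := lt_of_lt_of_le one_pos ht1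
  -- the key identity : exp (t/2) = t + 1
  have hsqrt : Real.sqrt (Real.exp 1) = Real.exp (1/2) := by
    rw [show Real.exp 1 = Real.exp (1/2) ^ 2 by
      rw [sq, ← Real.exp_add]; norm_num]
    exact Real.sqrt_sq (Real.exp_pos _).le
  have hwt : w = -(t + 1) / 2 := by simp only [ht]; ring
  have key : Real.exp (t / 2) = t + 1 := by
    have h1 : (t + 1) * Real.exp (-(t + 1) / 2) = Real.exp (-(1/2)) := by
      have := hW
      rw [hsqrt, hwt] at this
      rw [Real.exp_neg] at *
      have he : Real.exp ((t+1)/2) ≠ 0 := Real.exp_ne_zero _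
      have he2 : Real.exp (1/2) ≠ 0 := Real.exp_ne_zero _
      rw [show -(t+1)/2 = -((t+1)/2) by ring] at this ⊢
      rw [Real.exp_neg] at this ⊢
      field_simp at this ⊢
      linarith
    have h2 : Real.exp (t/2) * ((t + 1) * Real.exp (-(t + 1) / 2)) =
        Real.exp (t/2) * Real.exp (-(1/2)) := by rw [h1]
    calc Real.exp (t/2) = Real.exp (t/2) * Real.exp (-(1/2)) * Real.exp (1/2) := by
            rw [mul_assoc, ← Real.exp_add]; norm_num
      _ = Real.exp (t/2) * ((t + 1) * Real.exp (-(t + 1) / 2)) * Real.exp (1/2) := by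
            rw [h2]
      _ = (t + 1) * Real.exp (t/2 + -(t+1)/2 + 1/2) := by
            rw [Real.exp_add, Real.exp_add]; ring
      _ = t + 1 := by rw [show t/2 + -(t+1)/2 + 1/2 = 0 by ring, Real.exp_zero, mul_one]
  have hzero : 2 * (1 / t) * Real.log (1 + 1 / (1 / t)) - 1 = 0 := by
    rw [one_div_one_div, show (1:ℝ) + t = t + 1 by ring, ← key, Real.log_exp]
    field_simp
    ring
  have hmem : 1 / t ∈ Set.Ioc (0:ℝ) 1 := by
    constructor
    · positivity
    · rw [div_le_one ht0]; exact ht1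
  refine ⟨phi36_smo, ?_, hzero, ?_, ?_⟩
  · -- eventually negative near 0⁺
    have hc1 : ContinuousAt (fun s : ℝ => Real.log (1 + s)) 0 := by
      apply (Real.continuousAt_log ?_).comp (continuousAt_const.add continuousAt_id)
      norm_num
    have hcont : ContinuousAt (fun s : ℝ => 2 * (Real.log (1 + s) * s)
        - 2 * (s * Real.log s) - 1) 0 :=
      ((continuousAt_const.mul (hc1.mul continuousAt_id)).sub
        (continuousAt_const.mul Real.continuous_mul_log.continuousAt)).sub
        continuousAt_const
    have hval : (2 * (Real.log (1 + (0:ℝ)) * 0) - 2 * ((0:ℝ) * Real.log 0) - 1) = -1 := by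
      simp
    have hlim : Tendsto (fun s : ℝ => 2 * s * Real.log (1 + 1 / s) - 1)
        (nhdsWithin (0:ℝ) (Set.Ioi 0)) (nhds (-1)) := by
      have h1 : Tendsto (fun s : ℝ => 2 * (Real.log (1 + s) * s)
          - 2 * (s * Real.log s) - 1) (nhdsWithin (0:ℝ) (Set.Ioi 0)) (nhds (-1)) := by
        rw [← hval]
        exact hcont.continuousWithinAt
      refine h1.congr' ?_
      filter_upwards [self_mem_nhdsWithin] with s hs
      have hs0 : (0:ℝ) < s := hs
      have : (1:ℝ) + 1 / s = (1 + s) / s := by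
        field_simp; ring
      rw [this, Real.log_div (by positivity) hs0.ne']
      ring
    exact hlim.eventually (gt_mem_nhds (by norm_num : (-1:ℝ) < 0))
  · -- uniqueness
    intro s hs hfs
    exact phi36_smo.injOn hs hmem (by rw [hfs, hzero])
  · -- positivity on (s₀, 1]
    intro s hlt hle
    have hsmem : s ∈ Set.Ioc (0:ℝ) 1 := ⟨lt_trans hmem.1 hlt, hle⟩
    have h := phi36_smo hmem hsmem hlt
    simp only at h
    linarith
end

section
/- For every ψ ∈ (0, π/2], the quantity 1 - 6·sin²ψ + 2·sin³ψ + 6·sin³ψ·log(1 + 1/sin ψ) is positive whenever sin ψ ≥ 1/(-2·W₋₁(-1/(2√e)) - 1). -/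
/-- `w = W₋₁(-1/(2√e))` is the lower real branch value of the Lambert W
function, characterised by `w ≤ -1` and `w·e^w = -1/(2√e)`. -/
theorem phi36_center_density_positive
    (w : ℝ) (hw : w ≤ -1)
    (hW : w * Real.exp w = -1 / (2 * Real.sqrt (Real.exp 1))) :
    ∀ ψ : ℝ, 0 < ψ → ψ ≤ Real.pi / 2 →
      1 / (-2 * w - 1) ≤ Real.sin ψ →
      0 < 1 - 6 * Real.sin ψ ^ 2 + 2 * Real.sin ψ ^ 3
          + 6 * Real.sin ψ ^ 3 * Real.log (1 + 1 / Real.sin ψ) := by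
  intro ψ hψ0 hψ2 _
  set s := Real.sin ψ with hs
  have hspos : 0 < s := Real.sin_pos_of_pos_of_lt_pi hψ0
    (lt_of_le_of_lt hψ2 (by linarith [Real.pi_pos]))
  have hs1 : s ≤ 1 := Real.sin_le_one ψ
  have hinv : (1 : ℝ) ≤ 1 / s := by
    rw [le_div_iff₀ hspos]; linarith
  have hlog : Real.log 2 ≤ Real.log (1 + 1 / s) :=
    Real.log_le_log (by norm_num) (by linarith)
  have hl2 : (0.6931 : ℝ) < Real.log 2 := by
    have := Real.log_two_gt_d9; linarith
  have hcube : (0 : ℝ) < s ^ 3 := by positivity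
  have key : 6 * s ^ 3 * Real.log 2 ≤ 6 * s ^ 3 * Real.log (1 + 1 / s) := by
    apply mul_le_mul_of_nonneg_left hlog (by positivity)
  have poly : 0 < 1 - 6 * s ^ 2 + 2 * s ^ 3 + 6 * s ^ 3 * 0.6931 := by
    nlinarith [mul_nonneg hspos.le (sq_nonneg (s - 0.65)),
      sq_nonneg (2 * s - 1.3), sq_nonneg s, sq_nonneg (s - 1)]
  nlinarith [key, mul_le_mul_of_nonneg_left hl2.le (le_of_lt hcube)]
end
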